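/- arXiv:2107.10612 — 2 statements merged into one kernel-verified Lean document; each statement's English description precedes it below -/
import Mathlib

section
/- The Geometric Mechanism is incentive compatible in the family of DAGs: for every agent i with true out-edge set θ_i, every misreport θ'_i ⊆ θ_i, and every report profile θ'_{-i} of the other agents (such that the resulting graphs are DAGs), the selection probability of i under the Geometric Mechanism satisfies x_i((θ_i,θ'_{-i})) ≥ x_i((θ'_i,θ'_{-i})). (Incentive compatibility part of Theorem 1.) -/
/-- Agent `j` can reach agent `i` in the graph given by report profile `θ`
(an edge `(a,b)` exists when `b ∈ θ a`, i.e. agent `a` follows agent `b`). -/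
def Reaches {n : ℕ} (θ : Fin n → Finset (Fin n)) (j i : Fin n) : Prop :=
  Relation.ReflTransGen (fun a b => b ∈ θ a) j i

/-- The graph of the report profile `θ` is a DAG: no nontrivial directed cycles. -/
def IsDag {n : ℕ} (θ : Fin n → Finset (Fin n)) : Prop :=
  ∀ i j : Fin n, Reaches θ i j → Reaches θ j i → i = j

/-- The progeny `P_i(θ)` of agent `i`: all agents having a directed path to `i`
(including `i`). -/
def progenySet {n : ℕ} (θ : Fin n → Finset (Fin n)) (i : Fin n) : Set (Fin n) :=
  {j | Reaches θ j i}

/-- `p_i(θ) = |P_i(θ)|`. -/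
noncomputable def progeny {n : ℕ} (θ : Fin n → Finset (Fin n)) (i : Fin n) : ℕ :=
  Nat.card (progenySet θ i)

/-- `p_i ≻ p_j`: either `p_i > p_j`, or `p_i = p_j` and `i < j` (lexicographic
tie-breaking). -/
def Prec {n : ℕ} (θ : Fin n → Finset (Fin n)) (i j : Fin n) : Prop :=
  progeny θ j < progeny θ i ∨ (progeny θ i = progeny θ j ∧ i < j)

/-- Agent `i` is an influential node in `G(θ)`: after deleting all of `i`'s
out-edges, `p_i ≻ p_j` for every `j ≠ i`. -/
def Influential {n : ℕ} (θ : Fin n → Finset (Fin n)) (i : Fin n) : Prop :=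
  ∀ j : Fin n, j ≠ i → Prec (Function.update θ i ∅) i j

/-- The influential set: all influential nodes of `G(θ)`. -/
def influentialSet {n : ℕ} (θ : Fin n → Finset (Fin n)) : Set (Fin n) :=
  {i | Influential θ i}

open Classical in
/-- The Geometric Mechanism: an influential node ranked `j`-th from the top among
the `m` influential nodes (equivalently, with `m - j` influential nodes ranked
below her) is selected with probability `1/2^(m-j+1)`; non-influential agents are
selected with probability `0`. -/
noncomputable def geoProb {n : ℕ} (θ : Fin n → Finset (Fin n)) (i : Fin n) : ℝ :=
  if Influential θ i then
    (1 / 2 : ℝ) ^ (Nat.card {j : Fin n | Influential θ j ∧ Prec θ i j} + 1)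
  else 0


section Aux
variable {n : ℕ}

lemma reaches_mono {σ θ : Fin n → Finset (Fin n)} (h : ∀ a, σ a ⊆ θ a)
    {j i : Fin n} (hr : Reaches σ j i) : Reaches θ j i :=
  Relation.ReflTransGen.mono (fun a b hb => h a hb) _ _ hr

lemma progenySet_mono {σ θ : Fin n → Finset (Fin n)} (h : ∀ a, σ a ⊆ θ a) (i : Fin n) :
    progenySet σ i ⊆ progenySet θ i := fun _ hj => reaches_mono h hj

lemma progeny_mono {σ θ : Fin n → Finset (Fin n)} (h : ∀ a, σ a ⊆ θ a) (i : Fin n) :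
    progeny σ i ≤ progeny θ i :=
  Nat.card_mono (Set.toFinite _) (progenySet_mono h i)

/-- If no path from `i` to `t` exists, then paths to `t` avoid `i`'s out-edges,
so they survive changing `i`'s out-edges. -/
lemma reaches_of_not_through {σ θ : Fin n → Finset (Fin n)} {i : Fin n}
    (heq : ∀ a, a ≠ i → σ a = θ a) {t : Fin n} (hna : ¬ Reaches θ i t)
    {j : Fin n} (hr : Reaches θ j t) : Reaches σ j t := by
  induction hr using Relation.ReflTransGen.head_induction_on with
  | refl => exact Relation.ReflTransGen.refl
  | head hab hbc ih =>
    rename_i a b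
    by_cases ha : a = i
    · exact absurd (Relation.ReflTransGen.head hab hbc) (ha ▸ hna)
    · exact Relation.ReflTransGen.head ((heq a ha) ▸ hab) ih

/-- In a DAG, removing `i`'s out-edges does not change who reaches `i`. -/
lemma reaches_update_empty {θ : Fin n → Finset (Fin n)} (hd : IsDag θ) {i j : Fin n}
    (hr : Reaches θ j i) : Reaches (Function.update θ i ∅) j i := by
  induction hr using Relation.ReflTransGen.head_induction_on with
  | refl => exact Relation.ReflTransGen.refl
  | head hab hbc ih =>
    rename_i a b
    by_cases ha : a = i
    · subst ha
      have hab' : Reaches θ a b := Relation.ReflTransGen.single hab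
      have : a = b := hd a b hab' hbc
      exact this ▸ ih
    · refine Relation.ReflTransGen.head ?_ ih
      simpa [Function.update_of_ne ha] using hab

lemma update_subset (θ : Fin n → Finset (Fin n)) (i : Fin n) :
    ∀ a, Function.update θ i ∅ a ⊆ θ a := by
  intro a
  by_cases ha : a = i
  · subst ha; simp
  · simp [Function.update_of_ne ha]

lemma progeny_update_empty {θ : Fin n → Finset (Fin n)} (hd : IsDag θ) (i : Fin n) :
    progeny (Function.update θ i ∅) i = progeny θ i := by
  have hset : progenySet (Function.update θ i ∅) i = progenySet θ i := by
    ext j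
    constructor
    · exact fun hj => reaches_mono (update_subset θ i) hj
    · exact fun hj => reaches_update_empty hd hj
  unfold progeny
  rw [hset]

lemma not_reaches_of_prec {θ : Fin n → Finset (Fin n)} (hd : IsDag θ) {i j : Fin n}
    (hp : Prec θ i j) : ¬ Reaches θ i j := by
  intro hr
  have hsub : progenySet θ i ⊆ progenySet θ j := fun k hk => hk.trans hr
  have hcard : progeny θ i ≤ progeny θ j := Nat.card_mono (Set.toFinite _) hsub
  rcases hp with h | ⟨heq, hlt⟩
  · omega
  · have hset : progenySet θ i = progenySet θ j := by
      refine Set.eq_of_subset_of_ncard_le hsub ?_ (Set.toFinite _)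
      rw [← Nat.card_coe_set_eq, ← Nat.card_coe_set_eq]
      exact le_of_eq heq.symm
    have hji : Reaches θ j i := by
      have : j ∈ progenySet θ i := by rw [hset]; exact Relation.ReflTransGen.refl
      exact this
    exact hlt.ne (hd i j hr hji)

lemma prec_transfer {σ θ : Fin n → Finset (Fin n)} {i j : Fin n}
    (hpi : progeny σ i = progeny θ i) (hpj : progeny σ j ≤ progeny θ j)
    (hp : Prec θ i j) : Prec σ i j := by
  rcases hp with h | ⟨heq, hlt⟩
  · left; omega
  · have hle : progeny σ j ≤ progeny σ i := by omega
    rcases hle.lt_or_eq with h | h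
    · left; exact h
    · right; exact ⟨h.symm, hlt⟩

lemma prec_irrefl {θ : Fin n → Finset (Fin n)} (i : Fin n) : ¬ Prec θ i i := by
  rintro (h | ⟨-, h⟩)
  · exact lt_irrefl _ h
  · exact lt_irrefl _ h

end Aux

/-- **Theorem 1 (incentive compatibility).** The Geometric Mechanism is incentive
compatible in the family of DAGs: for every agent `i` with true out-edge set `θᵢ`,
every misreport `θᵢ' ⊆ θᵢ`, and every report profile `θ'` of the other agents
(such that the resulting graphs are DAGs),
`x_i((θᵢ, θ'_{-i})) ≥ x_i((θᵢ', θ'_{-i}))`. -/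
theorem geometric_mechanism_IC {n : ℕ} (θ' : Fin n → Finset (Fin n)) (i : Fin n)
    (θi θi' : Finset (Fin n)) (hsub : θi' ⊆ θi)
    (hd : IsDag (Function.update θ' i θi)) (hd' : IsDag (Function.update θ' i θi')) :
    geoProb (Function.update θ' i θi') i ≤ geoProb (Function.update θ' i θi) i := by
  classical
  set θ : Fin n → Finset (Fin n) := Function.update θ' i θi with hθ
  set τ : Fin n → Finset (Fin n) := Function.update θ' i θi' with hτ
  have hsubpt : ∀ a, τ a ⊆ θ a := by
    intro a
    by_cases ha : a = i
    · subst ha; simpa [hθ, hτ] using hsub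
    · simp [hθ, hτ, Function.update_of_ne ha]
  have heqpt : ∀ a, a ≠ i → τ a = θ a := by
    intro a ha; simp [hθ, hτ, Function.update_of_ne ha]
  have hG0 : Function.update θ i ∅ = Function.update τ i ∅ := by
    simp [hθ, hτ, Function.update_idem]
  have hInfIff : Influential θ i ↔ Influential τ i := by
    unfold Influential; rw [hG0]
  by_cases hI : Influential θ i
  · -- progeny of i is the same under both reports
    have hpieq : progeny τ i = progeny θ i := by
      rw [← progeny_update_empty hd' i, ← progeny_update_empty hd i, hG0]
    -- the set of influential nodes below i can only grow by misreporting
    have hsetsub : {j : Fin n | Influential θ j ∧ Prec θ i j} ⊆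
        {j : Fin n | Influential τ j ∧ Prec τ i j} := by
      rintro j ⟨hInfj, hPrecj⟩
      have hji : j ≠ i := by
        rintro rfl; exact prec_irrefl _ hPrecj
      have hnotreach : ¬ Reaches θ i j := not_reaches_of_prec hd hPrecj
      refine ⟨?_, prec_transfer hpieq (progeny_mono hsubpt j) hPrecj⟩
      intro k hk
      have h1 : Prec (Function.update θ j ∅) j k := hInfj k hk
      -- progeny of j unchanged when passing from update θ j ∅ to update τ j ∅
      have heqj : ∀ a, a ≠ i → Function.update τ j ∅ a = Function.update θ j ∅ a := by
        intro a ha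
        by_cases haj : a = j
        · subst haj; simp
        · rw [Function.update_of_ne haj, Function.update_of_ne haj]
          exact heqpt a ha
      have hsubj : ∀ a, Function.update τ j ∅ a ⊆ Function.update θ j ∅ a := by
        intro a
        by_cases haj : a = j
        · subst haj; simp
        · rw [Function.update_of_ne haj, Function.update_of_ne haj]
          exact hsubpt a
      have hnotreachj : ¬ Reaches (Function.update θ j ∅) i j := by
        intro hr
        exact hnotreach (reaches_mono (update_subset θ j) hr)
      have hpj : progeny (Function.update τ j ∅) j = progeny (Function.update θ j ∅) j := by
        have hset : progenySet (Function.update τ j ∅) j = progenySet (Function.update θ j ∅) j := by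
          ext a
          constructor
          · exact fun ha => reaches_mono hsubj ha
          · exact fun ha => reaches_of_not_through heqj hnotreachj ha
        unfold progeny
        rw [hset]
      exact prec_transfer hpj (progeny_mono hsubj k) h1
    have hcard : Nat.card {j : Fin n | Influential θ j ∧ Prec θ i j} ≤
        Nat.card {j : Fin n | Influential τ j ∧ Prec τ i j} :=
      Nat.card_mono (Set.toFinite _) hsetsub
    have hI' : Influential τ i := hInfIff.mp hI
    simp only [geoProb, if_pos hI, if_pos hI']
    exact pow_le_pow_of_le_one (by norm_num) (by norm_num) (by omega)
  · have hI' : ¬ Influential τ i := fun h => hI (hInfIff.mpr h)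
    simp [geoProb, hI, hI']
end

section
/- Nestedness of influential progenies: in any directed acyclic graph G(θ') with influential set S^inf(G(θ')) = {s_1,…,s_m} ordered so that p_{s_1} ≻ … ≻ p_{s_m}, the progeny sets of the influential nodes form a chain: P_{s_m}(θ') ⊆ P_{s_{m-1}}(θ') ⊆ … ⊆ P_{s_1}(θ'). -/
lemma reaches_of_update {n : ℕ} (θ : Fin n → Finset (Fin n)) (t j i : Fin n)
    (h : Reaches (Function.update θ t ∅) j i) : Reaches θ j i := by
  refine Relation.ReflTransGen.mono ?_ _ _ h
  intro a b hb
  by_cases ha : a = t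
  · subst ha; simp [Function.update_self] at hb
  · rwa [Function.update_of_ne ha] at hb

lemma reaches_self_update {n : ℕ} (θ : Fin n → Finset (Fin n)) (t j : Fin n)
    (h : Reaches θ j t) : Reaches (Function.update θ t ∅) j t := by
  induction h using Relation.ReflTransGen.head_induction_on with
  | refl => exact Relation.ReflTransGen.refl
  | @head a b hab _ ih =>
    by_cases ha : a = t
    · subst ha; exact Relation.ReflTransGen.refl
    · exact Relation.ReflTransGen.head (by rwa [Function.update_of_ne ha]) ih

lemma reaches_update_of_not_through {n : ℕ} (θ : Fin n → Finset (Fin n)) (t s j : Fin n)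
    (hts : ¬ Reaches θ t s) (h : Reaches θ j s) :
    Reaches (Function.update θ t ∅) j s := by
  induction h using Relation.ReflTransGen.head_induction_on with
  | refl => exact Relation.ReflTransGen.refl
  | @head a b hab hbs ih =>
    have ha : a ≠ t := by
      rintro rfl
      exact hts (Relation.ReflTransGen.head hab hbs)
    exact Relation.ReflTransGen.head (by rwa [Function.update_of_ne ha]) ih

lemma prec_asymm {n : ℕ} (θ : Fin n → Finset (Fin n)) (i j : Fin n)
    (h1 : Prec θ i j) (h2 : Prec θ j i) : False := by
  rcases h1 with h1 | ⟨h1, h1'⟩ <;> rcases h2 with h2 | ⟨h2, h2'⟩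
  · omega
  · omega
  · omega
  · exact absurd h2' (not_lt.mpr h1'.le)

/-- Nestedness of influential progenies: in any DAG `G(θ')`, the progeny sets of
the influential nodes form a chain: if `s` and `t` are influential nodes with
`p_s ≻ p_t` (so `t` is ranked below `s` in the influential set), then
`P_t(θ') ⊆ P_s(θ')`. -/
theorem influential_progeny_nested {n : ℕ} (θ' : Fin n → Finset (Fin n))
    (hdag : IsDag θ') (s t : Fin n) (hs : Influential θ' s) (ht : Influential θ' t)
    (hst : Prec θ' s t) :
    progenySet θ' t ⊆ progenySet θ' s := by
  by_cases hts : s = t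
  · subst hts; exact subset_rfl
  have hreach : Reaches θ' t s := by
    by_contra hnr
    -- with t's out-edges removed, progenies of s and t are unchanged
    have hPt : progenySet (Function.update θ' t ∅) t = progenySet θ' t := by
      ext j
      exact ⟨fun h => reaches_of_update θ' t j t h, fun h => reaches_self_update θ' t j h⟩
    have hPs : progenySet (Function.update θ' t ∅) s = progenySet θ' s := by
      ext j
      exact ⟨fun h => reaches_of_update θ' t j s h,
        fun h => reaches_update_of_not_through θ' t s j hnr h⟩
    have hprec : Prec (Function.update θ' t ∅) t s := ht s hts
    have : Prec θ' t s := by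
      unfold Prec progeny at hprec ⊢
      rwa [hPt, hPs] at hprec
    exact prec_asymm θ' s t hst this
  intro j hj
  exact Relation.ReflTransGen.trans hj hreach
end
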